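/- Let A be a commutative noetherian ring and f: M → N a homomorphism of finitely generated A-modules. Then the maps G_f(P): G_M(P) → G_N(P) are surjective for every finitely generated A-module P if and only if the induced map f^tl: M^tl → N^tl on torsionless quotients (the restriction of the double dual map f**: M** → N** to the images of the evaluation maps) is surjective. -/
import Mathlib


open Module LinearMap

/-- A linear map `φ : M → F` is *versal* if every linear map from `M` into a finitely
generated free module factors through `φ`. -/
def IsVersal (A : Type) [CommRing A] {M F : Type} [AddCommGroup M] [Module A M]
    [AddCommGroup F] [Module A F] (φ : M →ₗ[A] F) : Prop :=
  ∀ (E : Type) [AddCommGroup E] [Module A E] [Module.Free A E] [Module.Finite A E]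
    (g : M →ₗ[A] E), ∃ h : F →ₗ[A] E, g = h ∘ₗ φ

open Module LinearMap TensorProduct

/-- The natural map `α_{M,P} : M ⊗ P → Hom(M*, P)`, `α(m ⊗ p)(λ) = λ(m) • p`. -/
noncomputable def alphaMap (A : Type) [CommRing A] (M P : Type) [AddCommGroup M]
    [Module A M] [AddCommGroup P] [Module A P] :
    M ⊗[A] P →ₗ[A] (Module.Dual A M →ₗ[A] P) :=
  (dualTensorHom A (Module.Dual A M) P) ∘ₗ
    (TensorProduct.map (Module.Dual.eval A M) LinearMap.id)

/-- `G_M(P)` is the image of `α_{M,P} : M ⊗ P → Hom(M*, P)`. -/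
noncomputable def GFun (A : Type) [CommRing A] (M P : Type) [AddCommGroup M] [Module A M]
    [AddCommGroup P] [Module A P] : Submodule A (Module.Dual A M →ₗ[A] P) :=
  LinearMap.range (alphaMap A M P)

lemma alphaMap_tmul (A : Type) [CommRing A] (M P : Type) [AddCommGroup M]
    [Module A M] [AddCommGroup P] [Module A P] (m : M) (p : P) (l : Module.Dual A M) :
    alphaMap A M P (m ⊗ₜ p) l = l m • p := by
  simp [alphaMap]

lemma GFun_dual (A M : Type) [CommRing A] [AddCommGroup M] [Module A M] :
    GFun A M A = LinearMap.range (Module.Dual.eval A M) := by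
  apply le_antisymm
  · rintro _ ⟨t, rfl⟩
    induction t using TensorProduct.induction_on with
    | zero => simp
    | tmul m a =>
      refine ⟨a • m, ?_⟩
      ext l
      simp [alphaMap_tmul, mul_comm]
    | add x y hx hy =>
      rw [map_add]; exact add_mem hx hy
  · rintro _ ⟨m, rfl⟩
    refine ⟨m ⊗ₜ 1, ?_⟩
    ext l
    simp [alphaMap_tmul]

/-- For `f : M → N`, the maps `G_f(P) : G_M(P) → G_N(P)` are surjective for all finitely
generated `P` iff the induced map `f^tl : M^tl → N^tl` on torsionless quotients is
surjective. -/
theorem stmt15 (A : Type) [CommRing A] [IsNoetherianRing A]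
    (M N : Type) [AddCommGroup M] [Module A M] [Module.Finite A M]
    [AddCommGroup N] [Module A N] [Module.Finite A N]
    (f : M →ₗ[A] N) :
    (∀ (P : Type) [AddCommGroup P] [Module A P] [Module.Finite A P],
        GFun A N P ≤ Submodule.map (LinearMap.lcomp A P f.dualMap) (GFun A M P)) ↔
      LinearMap.range (Module.Dual.eval A N) ≤
        Submodule.map f.dualMap.dualMap (LinearMap.range (Module.Dual.eval A M)) := by
  have hmap : LinearMap.lcomp A A f.dualMap = f.dualMap.dualMap := by
    ext x l; rfl
  constructor
  · intro h
    have h1 := h A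
    rw [GFun_dual, GFun_dual, hmap] at h1
    exact h1
  · intro h P _ _ _
    rintro _ ⟨t, rfl⟩
    induction t using TensorProduct.induction_on with
    | zero => simp
    | tmul n p =>
      obtain ⟨x, ⟨m, rfl⟩, hx⟩ := h ⟨n, rfl⟩
      refine ⟨alphaMap A M P (m ⊗ₜ p), ⟨m ⊗ₜ p, rfl⟩, ?_⟩
      ext μ
      have hμ : μ (f m) = μ n := LinearMap.congr_fun hx μ
      simp [alphaMap_tmul, hμ]
    | add x y hx hy =>
      rw [map_add]; exact add_mem hx hy
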